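/- arXiv:1707.02700 — 6 statements merged into one kernel-verified Lean document; each statement's English description precedes it below -/
import Mathlib

section
/- Let $A$ be an $n\times n$ Jacobi matrix with orthogonal polynomials $\{p_k\}$. Define the minor polynomials $p_\ell^{(k)}(x) = \sum_{j=1}^n q_j^2 p_k(\lambda_j)\frac{p_\ell(x)-p_\ell(\lambda_j)}{x-\lambda_j}$. Then $x p_\ell^{(k)}(x) = a_{\ell+1}p_{\ell+1}^{(k)}(x) + b_{\ell+1}p_\ell^{(k)}(x) + a_\ell p_{\ell-1}^{(k)}(x) - \delta_{k,\ell}$; i.e., the minor polynomials satisfy the same three-term recurrence as $\{p_\ell\}$ except for a defect $-\delta_{k,\ell}$ at $\ell = k$. -/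
/-!
Write `[f]_c := (f - f(c)) / (X - c)`. Multiplication by `X` commutes with `[·]_c` up to the
constant `f(c)`: `[X f]_c = X [f]_c + f(c)`. Applying the linear map `[·]_{λ_j}` to the three-term
recurrence of the `p_ℓ` therefore reproduces that recurrence for `[p_ℓ]_{λ_j}`, with the defect
`-p_ℓ(λ_j)`. Averaging against the weights `q_j² p_k(λ_j)` turns the defect into
`-∑_j q_j² p_k(λ_j) p_ℓ(λ_j) = -δ_{kℓ}` by the dual orthogonality relations.
-/

open Polynomial Finset

namespace Polynomial

variable {R : Type*} [CommRing R]

noncomputable def diffQuot (f : R[X]) (c : R) : R[X] :=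
  (f - C (f.eval c)) /ₘ (X - C c)

theorem X_sub_C_mul_diffQuot (f : R[X]) (c : R) :
    (X - C c) * diffQuot f c = f - C (f.eval c) :=
  mul_divByMonic_eq_iff_isRoot.mpr (by simp)

theorem eq_diffQuot_iff {f g : R[X]} {c : R} :
    g = diffQuot f c ↔ (X - C c) * g = f - C (f.eval c) := by
  rw [← X_sub_C_mul_diffQuot]
  exact (monic_X_sub_C c).isRegular.left.eq_iff.symm

@[simp]
theorem diffQuot_C (a c : R) : diffQuot (C a) c = 0 :=
  (eq_diffQuot_iff.mpr (by simp)).symm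

@[simp]
theorem diffQuot_one (c : R) : diffQuot 1 c = 0 := by
  rw [← C_1, diffQuot_C]

@[simp]
theorem diffQuot_add (f g : R[X]) (c : R) :
    diffQuot (f + g) c = diffQuot f c + diffQuot g c := by
  refine (eq_diffQuot_iff.mpr ?_).symm
  rw [eval_add, C_add]
  linear_combination X_sub_C_mul_diffQuot f c + X_sub_C_mul_diffQuot g c

@[simp]
theorem diffQuot_C_mul (a : R) (f : R[X]) (c : R) :
    diffQuot (C a * f) c = C a * diffQuot f c := by
  refine (eq_diffQuot_iff.mpr ?_).symm
  rw [eval_mul, eval_C, C_mul]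
  linear_combination C a * X_sub_C_mul_diffQuot f c

theorem diffQuot_X_mul (f : R[X]) (c : R) :
    diffQuot (X * f) c = X * diffQuot f c + C (f.eval c) := by
  refine (eq_diffQuot_iff.mpr ?_).symm
  rw [eval_mul, eval_X, C_mul]
  linear_combination X * X_sub_C_mul_diffQuot f c

section ThreeTermRecurrence

variable (a b : ℕ → R) (p : ℕ → R[X]) (h0 : p 0 = 1)
  (hbase : X * p 0 = C (a 1) * p 1 + C (b 1) * p 0)
  (hrec : ∀ k : ℕ, X * p (k + 1) =
    C (a (k + 2)) * p (k + 2) + C (b (k + 2)) * p (k + 1) + C (a (k + 1)) * p k)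
include h0 hbase hrec

theorem X_mul_diffQuot_of_recurrence (c : R) (l : ℕ) :
    X * diffQuot (p l) c =
      C (a (l + 1)) * diffQuot (p (l + 1)) c + C (b (l + 1)) * diffQuot (p l) c +
        C (a l) * diffQuot (p (l - 1)) c - C ((p l).eval c) := by
  have hX : diffQuot (X * p l) c =
      C (a (l + 1)) * diffQuot (p (l + 1)) c + C (b (l + 1)) * diffQuot (p l) c +
        C (a l) * diffQuot (p (l - 1)) c := by
    cases l with
    -- `0 - 1 = 0` in `ℕ`; the spurious term `a 0 * diffQuot (p 0) c` vanishes as `p 0 = 1`.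
    | zero => rw [hbase]; simp [h0]
    | succ m => simp [hrec m]
  rw [diffQuot_X_mul] at hX
  linear_combination hX

theorem X_mul_sum_diffQuot_of_recurrence {ι : Type*} (s : Finset ι) (w x : ι → R) (l : ℕ) :
    X * ∑ i ∈ s, C (w i) * diffQuot (p l) (x i) =
      C (a (l + 1)) * ∑ i ∈ s, C (w i) * diffQuot (p (l + 1)) (x i) +
        C (b (l + 1)) * ∑ i ∈ s, C (w i) * diffQuot (p l) (x i) +
        C (a l) * ∑ i ∈ s, C (w i) * diffQuot (p (l - 1)) (x i) -
        C (∑ i ∈ s, w i * (p l).eval (x i)) := by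
  simp only [mul_sum, map_sum, C_mul, ← sum_add_distrib, ← sum_sub_distrib]
  refine sum_congr rfl fun i _ => ?_
  linear_combination C (w i) * X_mul_diffQuot_of_recurrence a b p h0 hbase hrec (x i) l

end ThreeTermRecurrence

end Polynomial

theorem minor_polynomial_recurrence_general
    (n : ℕ)
    (a b : ℕ → ℝ) (p : ℕ → Polynomial ℝ)
    (h0 : p 0 = 1)
    (hbase : (X : Polynomial ℝ) * p 0 = C (a 1) * p 1 + C (b 1) * p 0)
    (hrec : ∀ k : ℕ, (X : Polynomial ℝ) * p (k + 1) =
      C (a (k + 2)) * p (k + 2) + C (b (k + 2)) * p (k + 1) + C (a (k + 1)) * p k)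
    (lam : Fin n → ℝ)
    (q : Fin n → ℝ)
    (horth : ∀ k l : ℕ, k < n → l < n →
      ∑ i, q i ^ 2 * (p k).eval (lam i) * (p l).eval (lam i) =
        if k = l then 1 else 0)
    (pm : ℕ → ℕ → Polynomial ℝ)
    (hpm : ∀ k l : ℕ, pm k l =
      ∑ i, C (q i ^ 2 * (p k).eval (lam i)) *
        ((p l - C ((p l).eval (lam i))) /ₘ (X - C (lam i))))
    (k l : ℕ) (hk : k < n) (hl' : l < n) :
    (X : Polynomial ℝ) * pm k l =
      C (a (l + 1)) * pm k (l + 1) + C (b (l + 1)) * pm k l +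
        C (a l) * pm k (l - 1) - (if k = l then 1 else 0) := by
  have hpm' : ∀ m, pm k m = ∑ i, C (q i ^ 2 * (p k).eval (lam i)) * diffQuot (p m) (lam i) :=
    hpm k
  rw [hpm', hpm', hpm', X_mul_sum_diffQuot_of_recurrence a b p h0 hbase hrec,
    horth k l hk hl', apply_ite C, map_one, map_zero]

/-- The minor polynomials satisfy the same three-term recurrence as the orthogonal
polynomials, up to a defect `-δ_{k,ℓ}`. -/
theorem minor_polynomial_recurrence
    (n : ℕ)
    (a b : ℕ → ℝ) (p : ℕ → Polynomial ℝ)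
    (hpos : ∀ k, 1 ≤ k → 0 < a k)
    (h0 : p 0 = 1)
    (hbase : (X : Polynomial ℝ) * p 0 = C (a 1) * p 1 + C (b 1) * p 0)
    (hrec : ∀ k : ℕ, (X : Polynomial ℝ) * p (k + 1) =
      C (a (k + 2)) * p (k + 2) + C (b (k + 2)) * p (k + 1) + C (a (k + 1)) * p k)
    (lam : Fin n → ℝ) (hl : Function.Injective lam)
    (q : Fin n → ℝ)
    (horth : ∀ k l : ℕ, k < n → l < n →
      ∑ i, q i ^ 2 * (p k).eval (lam i) * (p l).eval (lam i) =
        if k = l then 1 else 0)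
    (pm : ℕ → ℕ → Polynomial ℝ)
    (hpm : ∀ k l : ℕ, pm k l =
      ∑ i, C (q i ^ 2 * (p k).eval (lam i)) *
        ((p l - C ((p l).eval (lam i))) /ₘ (X - C (lam i))))
    (k l : ℕ) (hk : k < n) (hl' : l < n) :
    (X : Polynomial ℝ) * pm k l =
      C (a (l + 1)) * pm k (l + 1) + C (b (l + 1)) * pm k l +
        C (a l) * pm k (l - 1) - (if k = l then 1 else 0) :=
  minor_polynomial_recurrence_general n a b p h0 hbase hrec lam q horth pm hpm k l hk hl'
end

section
/- For the orthogonal polynomials $\{p_\ell\}$ and minor polynomials $\{p_\ell^{(k)}\}$ of a Jacobi matrix: $\frac{p_\ell(x)-p_\ell(y)}{x-y} = \sum_{k=1}^{\ell} p_\ell^{(k-1)}(x)\, p_{k-1}(y)$ as polynomials in $x$ and $y$, and consequently $p_\ell'(x) = \sum_{k=1}^{\ell} p_\ell^{(k-1)}(x)\,p_{k-1}(x)$. -/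
/-!
The divided difference `D(x, y) = (p_ℓ(x) - p_ℓ(y)) / (x - y)` is symmetric in `x` and `y` and
has degree `< ℓ` in each of them. Fix `x` and expand `y ↦ D(x, y)` in `p_0, …, p_{ℓ-1}`, which are
orthonormal for `⟨f, g⟩ = ∑ᵢ qᵢ² f(λᵢ) g(λᵢ)`: by symmetry the `k`-th coefficient is
`∑ᵢ qᵢ² p_k(λᵢ) D(λᵢ, x) = p_ℓ^{(k)}(x)`. On the diagonal `D(y, y) = p_ℓ'(y)`.
-/

open Polynomial Finset

namespace Polynomial

section DividedDifference

variable {R : Type*} [CommRing R]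

theorem X_sub_C_mul_divByMonic_eq_sub_C_eval (f : R[X]) (y : R) :
    (X - C y) * (f /ₘ (X - C y)) = f - C (f.eval y) := by
  rw [X_sub_C_mul_divByMonic_eq_sub_modByMonic, modByMonic_X_sub_C_eq_C_eval]

theorem sub_C_eval_divByMonic_X_sub_C (f : R[X]) (y : R) :
    (f - C (f.eval y)) /ₘ (X - C y) = f /ₘ (X - C y) := by
  rw [← X_sub_C_mul_divByMonic_eq_sub_C_eval, mul_divByMonic_cancel_left _ (monic_X_sub_C y)]

theorem eval_divByMonic_X_sub_C_self (f : R[X]) (y : R) :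
    (f /ₘ (X - C y)).eval y = (derivative f).eval y := by
  simpa using congrArg (eval y) (divByMonic_add_X_sub_C_mul_derivative_divByMonic_eq_derivative f y)

theorem degree_divByMonic_X_sub_C_lt {f : R[X]} {m : ℕ} (hf : f.degree ≤ m) (y : R) :
    (f /ₘ (X - C y)).degree < m := by
  rcases eq_or_ne f 0 with rfl | hf0
  · simp
  · nontriviality R
    exact (degree_divByMonic_lt f _ hf0 (by simp)).trans_le hf

theorem eval_divByMonic_X_sub_C_comm [IsDomain R] (f : R[X]) (x y : R) :
    (f /ₘ (X - C y)).eval x = (f /ₘ (X - C x)).eval y := by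
  rcases eq_or_ne x y with rfl | hxy
  · rfl
  have hx := congrArg (eval x) (X_sub_C_mul_divByMonic_eq_sub_C_eval f y)
  have hy := congrArg (eval y) (X_sub_C_mul_divByMonic_eq_sub_C_eval f x)
  simp only [eval_mul, eval_sub, eval_X, eval_C] at hx hy
  refine mul_left_cancel₀ (sub_ne_zero.2 hxy) ?_
  linear_combination hx + hy

end DividedDifference

section JacobiRecurrence

variable {R : Type*} [CommRing R] [IsDomain R]

theorem degree_eq_succ_of_X_mul_eq {a b c : R} {r s t : R[X]} {d : ℕ} (ha : a ≠ 0)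
    (h : X * s = C a * r + C b * s + C c * t) (hs : s.degree = d) (ht : t.degree < d) :
    r.degree = ((d + 1 : ℕ) : WithBot ℕ) := by
  have hr : C a * r = (X - C b) * s - C c * t := by linear_combination -h
  have hXs : ((X - C b) * s).degree = ((d + 1 : ℕ) : WithBot ℕ) := by
    rw [degree_mul, degree_X_sub_C, hs, add_comm]; rfl
  have hct : (C c * t).degree < ((X - C b) * s).degree := by
    rw [← smul_eq_C_mul, hXs]
    exact (degree_smul_le c t).trans_lt (ht.trans (by exact_mod_cast d.lt_succ_self))
  rw [← degree_C_mul ha, hr, degree_sub_eq_left_of_degree_lt hct, hXs]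

theorem degree_eq_of_threeTermRecurrence {a b : ℕ → R} {p : ℕ → R[X]}
    (ha : ∀ k, 1 ≤ k → a k ≠ 0) (h0 : p 0 = 1)
    (hbase : X * p 0 = C (a 1) * p 1 + C (b 1) * p 0)
    (hrec : ∀ k : ℕ, X * p (k + 1) =
      C (a (k + 2)) * p (k + 2) + C (b (k + 2)) * p (k + 1) + C (a (k + 1)) * p k)
    (k : ℕ) : (p k).degree = k := by
  induction k using Nat.twoStepInduction with
  | zero => simp [h0]
  | one =>
    exact degree_eq_succ_of_X_mul_eq (c := 0) (t := 0) (ha 1 le_rfl) (by simpa using hbase)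
      (by simp [h0]) (by simp)
  | more k hk hk1 =>
    exact degree_eq_succ_of_X_mul_eq (ha (k + 2) (by omega)) (hrec k) hk1
      (hk.trans_lt (by exact_mod_cast k.lt_succ_self))

end JacobiRecurrence

section DiscreteInner

variable {ι R K : Type*} [Fintype ι] [CommSemiring R] [Field K]

def discreteInner (w lam : ι → R) (f g : R[X]) : R :=
  ∑ i, w i * f.eval (lam i) * g.eval (lam i)

theorem discreteInner_add_left (w lam : ι → R) (f₁ f₂ g : R[X]) :
    discreteInner w lam (f₁ + f₂) g = discreteInner w lam f₁ g + discreteInner w lam f₂ g := by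
  simp only [discreteInner, eval_add, ← sum_add_distrib]
  exact sum_congr rfl fun i _ ↦ by ring

theorem discreteInner_smul_left (w lam : ι → R) (c : R) (f g : R[X]) :
    discreteInner w lam (c • f) g = c * discreteInner w lam f g := by
  simp only [discreteInner, eval_smul, smul_eq_mul, mul_sum]
  exact sum_congr rfl fun i _ ↦ by ring

theorem eq_sum_C_discreteInner_mul {w lam : ι → K} {p : ℕ → K[X]} {m : ℕ}
    (hp : ∀ k, (p k).degree = k)
    (horth : ∀ k l, k < m → l < m → discreteInner w lam (p k) (p l) = if k = l then 1 else 0)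
    {f : K[X]} (hf : f.degree < m) :
    f = ∑ k ∈ range m, C (discreteInner w lam f (p k)) * p k := by
  let S : Sequence K := ⟨p, hp⟩
  have hspan : f ∈ Submodule.span K (p '' Set.Iio m) := by
    rw [S.span_degreeLT fun i _ ↦ (leadingCoeff_ne_zero.2 (S.ne_zero i)).isUnit]
    exact mem_degreeLT.2 hf
  clear hf
  induction hspan using Submodule.span_induction with
  | mem g hg =>
    obtain ⟨j, hj : j < m, rfl⟩ := hg
    rw [sum_congr rfl fun k hk ↦ by rw [horth j k hj (mem_range.1 hk)]]
    simp [hj]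
  | zero => simp [discreteInner]
  | add f g _ _ hf hg =>
    simp only [discreteInner_add_left, C_add, add_mul, sum_add_distrib]
    rw [← hf, ← hg]
  | smul c f _ hf =>
    simp only [discreteInner_smul_left, C_mul, mul_assoc, ← mul_sum]
    rw [← hf, smul_eq_C_mul]

theorem divByMonic_X_sub_C_eq_sum [Infinite K] {w lam : ι → K} {p : ℕ → K[X]} {m : ℕ}
    (hp : ∀ k, (p k).degree = k)
    (horth : ∀ k l, k < m → l < m → discreteInner w lam (p k) (p l) = if k = l then 1 else 0)
    {f : K[X]} (hf : f.degree ≤ m) (y : K) :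
    f /ₘ (X - C y) = ∑ k ∈ range m,
      C ((p k).eval y) * ∑ i, C (w i * (p k).eval (lam i)) * (f /ₘ (X - C (lam i))) := by
  refine funext fun x ↦ ?_
  rw [eval_divByMonic_X_sub_C_comm,
    eq_sum_C_discreteInner_mul hp horth (degree_divByMonic_X_sub_C_lt hf x)]
  simp only [eval_finsetSum, eval_mul, eval_C, discreteInner, mul_sum, sum_mul]
  refine sum_congr rfl fun k _ ↦ sum_congr rfl fun i _ ↦ ?_
  rw [eval_divByMonic_X_sub_C_comm f (lam i) x]
  ring

end DiscreteInner

end Polynomial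

theorem difference_quotient_expansion_general
    (n : ℕ)
    (a b : ℕ → ℝ) (p : ℕ → Polynomial ℝ)
    (hpos : ∀ k, 1 ≤ k → 0 < a k)
    (h0 : p 0 = 1)
    (hbase : (X : Polynomial ℝ) * p 0 = C (a 1) * p 1 + C (b 1) * p 0)
    (hrec : ∀ k : ℕ, (X : Polynomial ℝ) * p (k + 1) =
      C (a (k + 2)) * p (k + 2) + C (b (k + 2)) * p (k + 1) + C (a (k + 1)) * p k)
    (lam : Fin n → ℝ)
    (q : Fin n → ℝ)
    (horth : ∀ k l : ℕ, k < n → l < n →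
      ∑ i, q i ^ 2 * (p k).eval (lam i) * (p l).eval (lam i) =
        if k = l then 1 else 0)
    (pm : ℕ → ℕ → Polynomial ℝ)
    (hpm : ∀ k l : ℕ, pm k l =
      ∑ i, C (q i ^ 2 * (p k).eval (lam i)) *
        ((p l - C ((p l).eval (lam i))) /ₘ (X - C (lam i))))
    (l : ℕ) (hln : l < n) :
    (∀ y : ℝ, (p l - C ((p l).eval y)) /ₘ (X - C y) =
      ∑ k ∈ range l, C ((p k).eval y) * pm k l) ∧
    derivative (p l) = ∑ k ∈ range l, pm k l * p k := by
  have hdeg := degree_eq_of_threeTermRecurrence (fun k hk ↦ (hpos k hk).ne') h0 hbase hrec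
  have hexp := divByMonic_X_sub_C_eq_sum (w := fun i ↦ q i ^ 2) (lam := lam) (m := l) hdeg
    (fun k j hk hj ↦ horth k j (hk.trans hln) (hj.trans hln)) (hdeg l).le
  have hminor : ∀ k, pm k l =
      ∑ i, C (q i ^ 2 * (p k).eval (lam i)) * (p l /ₘ (X - C (lam i))) := by
    simpa only [sub_C_eval_divByMonic_X_sub_C] using fun k ↦ hpm k l
  refine ⟨fun y ↦ ?_, funext fun y ↦ ?_⟩
  · rw [sub_C_eval_divByMonic_X_sub_C, hexp y]
    simp only [hminor]
  · rw [← eval_divByMonic_X_sub_C_self, hexp y]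
    simp [eval_finsetSum, hminor, mul_comm]

/-- Expansion of the difference quotient of `p_ℓ` in terms of minor polynomials,
and the consequent formula for `p_ℓ'`. -/
theorem difference_quotient_expansion
    (n : ℕ)
    (a b : ℕ → ℝ) (p : ℕ → Polynomial ℝ)
    (hpos : ∀ k, 1 ≤ k → 0 < a k)
    (h0 : p 0 = 1)
    (hbase : (X : Polynomial ℝ) * p 0 = C (a 1) * p 1 + C (b 1) * p 0)
    (hrec : ∀ k : ℕ, (X : Polynomial ℝ) * p (k + 1) =
      C (a (k + 2)) * p (k + 2) + C (b (k + 2)) * p (k + 1) + C (a (k + 1)) * p k)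
    (lam : Fin n → ℝ) (hl : Function.Injective lam)
    (q : Fin n → ℝ)
    (horth : ∀ k l : ℕ, k < n → l < n →
      ∑ i, q i ^ 2 * (p k).eval (lam i) * (p l).eval (lam i) =
        if k = l then 1 else 0)
    (horth2 : ∀ i j : Fin n,
      q i * q j * ∑ m ∈ range n, (p m).eval (lam i) * (p m).eval (lam j) =
        if i = j then 1 else 0)
    (pm : ℕ → ℕ → Polynomial ℝ)
    (hpm : ∀ k l : ℕ, pm k l =
      ∑ i, C (q i ^ 2 * (p k).eval (lam i)) *
        ((p l - C ((p l).eval (lam i))) /ₘ (X - C (lam i))))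
    (l : ℕ) (hln : l < n) :
    (∀ y : ℝ, (p l - C ((p l).eval y)) /ₘ (X - C y) =
      ∑ k ∈ range l, C ((p k).eval y) * pm k l) ∧
    derivative (p l) = ∑ k ∈ range l, pm k l * p k :=
  difference_quotient_expansion_general n a b p hpos h0 hbase hrec lam q horth pm hpm l hln
end

section
/- Mixed Christoffel–Darboux formula: for the orthogonal polynomials $\{p_k\}$ and minor polynomials $\{p_k^{(r)}\}$ of a Jacobi matrix, and any $r < \ell$, $\sum_{k=1}^{\ell} p_{k-1}(x)\,p_{k-1}^{(r)}(y)\,(x-y) = a_\ell\big(p_\ell(x)p_{\ell-1}^{(r)}(y) - p_{\ell-1}(x)p_\ell^{(r)}(y)\big) + p_r(x)$. -/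
open Polynomial Finset

/-!
Fix `x`, `y` and put `u k = p_k(x)`, `v k = p_k^{(r)}(y)`. Multiplying the recurrence of `u` by
`v` and that of `v` by `u` and subtracting shows that the Casoratian
`W_n = a_{n+1} (u_{n+1} v_n - u_n v_{n+1})` satisfies `W_{n+1} - W_n = u_{n+1} v_{n+1} (x - y)`
for `n ≥ r`, where `v` obeys the undisturbed recurrence. So the sum telescopes, and the initial values
`v_r = 0`, `v_{r+1} = 1 / a_{r+1}` give `W_r = -u_r`.
-/

section Casoratian

variable {R : Type*} [CommRing R]

def casoratian (a u v : ℕ → R) (n : ℕ) : R :=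
  a (n + 1) * (u (n + 1) * v n - u n * v (n + 1))

variable (a b u v : ℕ → R) (x y : R)

theorem casoratian_succ {n : ℕ}
    (hu : x * u (n + 1) = a (n + 2) * u (n + 2) + b (n + 2) * u (n + 1) + a (n + 1) * u n)
    (hv : y * v (n + 1) = a (n + 2) * v (n + 2) + b (n + 2) * v (n + 1) + a (n + 1) * v n) :
    casoratian a u v (n + 1) = casoratian a u v n + u (n + 1) * v (n + 1) * (x - y) := by
  unfold casoratian
  linear_combination u (n + 1) * hv - v (n + 1) * hu

theorem sum_Ico_mul_sub_eq_casoratian_sub {r n : ℕ} (hrn : r ≤ n)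
    (hu : ∀ k, r ≤ k →
      x * u (k + 1) = a (k + 2) * u (k + 2) + b (k + 2) * u (k + 1) + a (k + 1) * u k)
    (hv : ∀ k, r ≤ k →
      y * v (k + 1) = a (k + 2) * v (k + 2) + b (k + 2) * v (k + 1) + a (k + 1) * v k) :
    ∑ k ∈ Ico (r + 1) (n + 1), u k * v k * (x - y) = casoratian a u v n - casoratian a u v r := by
  induction n, hrn using Nat.le_induction with
  | base => simp
  | succ n hrn ih =>
    rw [sum_Ico_succ_top (by omega), ih, casoratian_succ a b u v x y (hu n hrn) (hv n hrn)]
    ring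

end Casoratian

theorem casoratian_eq_neg_of_initial {K : Type*} [Field K] {a u v : ℕ → K} {r : ℕ}
    (ha : a (r + 1) ≠ 0) (hv₀ : v r = 0) (hv₁ : v (r + 1) = 1 / a (r + 1)) :
    casoratian a u v r = -u r := by
  rw [casoratian, hv₀, hv₁]
  field_simp
  ring

theorem mixed_christoffel_darboux_general
    (a b : ℕ → ℝ) (p pr : ℕ → Polynomial ℝ) (r : ℕ)
    (hpos : ∀ k, 1 ≤ k → 0 < a k)
    (hrec : ∀ k : ℕ, (X : Polynomial ℝ) * p (k + 1) =
      C (a (k + 2)) * p (k + 2) + C (b (k + 2)) * p (k + 1) + C (a (k + 1)) * p k)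
    (hvan : ∀ k, k ≤ r → pr k = 0)
    (hinit : pr (r + 1) = C (1 / a (r + 1)))
    (hprrec : ∀ k : ℕ, (X : Polynomial ℝ) * pr (k + 1) =
      C (a (k + 2)) * pr (k + 2) + C (b (k + 2)) * pr (k + 1) + C (a (k + 1)) * pr k -
        (if r = k + 1 then 1 else 0))
    (l : ℕ) (hrl : r < l) (x y : ℝ) :
    ∑ k ∈ range l, (p k).eval x * (pr k).eval y * (x - y) =
      a l * ((p l).eval x * (pr (l - 1)).eval y - (p (l - 1)).eval x * (pr l).eval y) +
        (p r).eval x := by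
  obtain ⟨n, rfl⟩ : ∃ n, l = n + 1 := ⟨l - 1, by omega⟩
  have hu (k : ℕ) (_ : r ≤ k) := by simpa using congrArg (eval x) (hrec k)
  have hv (k : ℕ) (hk : r ≤ k) := by
    simpa [if_neg (show r ≠ k + 1 by omega)] using congrArg (eval y) (hprrec k)
  have hlow : ∑ k ∈ range (r + 1), (p k).eval x * (pr k).eval y * (x - y) = 0 :=
    sum_eq_zero fun k hk => by simp [hvan k (Nat.lt_succ_iff.mp (mem_range.mp hk))]
  have hstart : casoratian a (fun k => (p k).eval x) (fun k => (pr k).eval y) r = -(p r).eval x :=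
    casoratian_eq_neg_of_initial (hpos (r + 1) (by omega)).ne' (by simp [hvan r le_rfl])
      (by simp [hinit])
  rw [← sum_range_add_sum_Ico _ (by omega : r + 1 ≤ n + 1), hlow, zero_add,
    sum_Ico_mul_sub_eq_casoratian_sub a b _ _ x y (by omega : r ≤ n) hu hv, hstart]
  simp [casoratian]

/-- Mixed Christoffel–Darboux formula for orthogonal polynomials and minor polynomials. -/
theorem mixed_christoffel_darboux
    (a b : ℕ → ℝ) (p pr : ℕ → Polynomial ℝ) (r : ℕ)
    (hpos : ∀ k, 1 ≤ k → 0 < a k)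
    (h0 : p 0 = 1)
    (hbase : (X : Polynomial ℝ) * p 0 = C (a 1) * p 1 + C (b 1) * p 0)
    (hrec : ∀ k : ℕ, (X : Polynomial ℝ) * p (k + 1) =
      C (a (k + 2)) * p (k + 2) + C (b (k + 2)) * p (k + 1) + C (a (k + 1)) * p k)
    (hvan : ∀ k, k ≤ r → pr k = 0)
    (hinit : pr (r + 1) = C (1 / a (r + 1)))
    (hprbase : (X : Polynomial ℝ) * pr 0 =
      C (a 1) * pr 1 + C (b 1) * pr 0 - (if r = 0 then 1 else 0))
    (hprrec : ∀ k : ℕ, (X : Polynomial ℝ) * pr (k + 1) =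
      C (a (k + 2)) * pr (k + 2) + C (b (k + 2)) * pr (k + 1) + C (a (k + 1)) * pr k -
        (if r = k + 1 then 1 else 0))
    (l : ℕ) (hrl : r < l) (x y : ℝ) :
    ∑ k ∈ range l, (p k).eval x * (pr k).eval y * (x - y) =
      a l * ((p l).eval x * (pr (l - 1)).eval y - (p (l - 1)).eval x * (pr l).eval y) +
        (p r).eval x :=
  mixed_christoffel_darboux_general a b p pr r hpos hrec hvan hinit hprrec l hrl x y
end

section
/- Dual recurrence in the superscript: for $0 \leq j < \ell$, $x\, p_\ell^{(j)}(x) = a_{j+1} p_\ell^{(j+1)}(x) + b_{j+1} p_\ell^{(j)}(x) + a_j p_\ell^{(j-1)}(x)$, where one takes $a_0 = 1$ and $p_\ell^{(-1)}(x) := p_\ell(x)$. -/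
/-!
The minors `p_ℓ^{(j)} = p_j q_ℓ - p_ℓ q_j`, with `q = p^{(0)}`, are, as functions of `j`, linear
combinations of the two solutions `p` and `q` of the three-term recurrence, so they satisfy that
recurrence in `j` as well. The closed form itself holds because, for fixed `j`, both sides solve the
recurrence in `ℓ ≥ j` with the same two initial values: both vanish at `ℓ = j`, and at `ℓ = j + 1`
the constant Wronskian `a_{k+1} (p_k q_{k+1} - p_{k+1} q_k) = 1` matches the normalisation of the
minors.
-/

open Polynomial

/-- `u` solves `x u_n = a_{n+1} u_{n+1} + b_{n+1} u_n + a_n u_{n-1}` for every `n > r`. -/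
def ThreeTermRecurrence {S : Type*} [CommRing S] (x : S) (a b : ℕ → S) (r : ℕ) (u : ℕ → S) :
    Prop :=
  ∀ k, r ≤ k → x * u (k + 1) = a (k + 2) * u (k + 2) + b (k + 2) * u (k + 1) + a (k + 1) * u k

namespace ThreeTermRecurrence

variable {S : Type*} [CommRing S] {x : S} {a b : ℕ → S} {r : ℕ} {u v w : ℕ → S}

theorem mono {s : ℕ} (hrs : r ≤ s) (hu : ThreeTermRecurrence x a b r u) :
    ThreeTermRecurrence x a b s u :=
  fun k hk => hu k (hrs.trans hk)

theorem linear_combination (hu : ThreeTermRecurrence x a b r u)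
    (hv : ThreeTermRecurrence x a b r v) (c d : S) :
    ThreeTermRecurrence x a b r (fun k => c * u k + d * v k) :=
  fun k hk => by linear_combination c * hu k hk + d * hv k hk

theorem wronskian_eq (hu : ThreeTermRecurrence x a b r u) (hv : ThreeTermRecurrence x a b r v)
    {k : ℕ} (hk : r ≤ k) :
    a (k + 1) * (u k * v (k + 1) - u (k + 1) * v k) =
      a (r + 1) * (u r * v (r + 1) - u (r + 1) * v r) := by
  induction k, hk using Nat.le_induction with
  | base => rfl
  | succ k hk ih => linear_combination v (k + 1) * hu k hk - u (k + 1) * hv k hk + ih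

theorem eq_of_eq_of_eq_succ [IsDomain S] (ha : ∀ k, a (k + 2) ≠ 0)
    (hu : ThreeTermRecurrence x a b r u) (hv : ThreeTermRecurrence x a b r v)
    (h₀ : u r = v r) (h₁ : u (r + 1) = v (r + 1)) {k : ℕ} (hk : r ≤ k) : u k = v k := by
  suffices h : ∀ n, u (r + n) = v (r + n) ∧ u (r + n + 1) = v (r + n + 1) by
    obtain ⟨n, rfl⟩ := Nat.exists_eq_add_of_le hk
    exact (h n).1
  intro n
  induction n with
  | zero => exact ⟨h₀, h₁⟩
  | succ n ih =>
    refine ⟨ih.2, mul_left_cancel₀ (ha (r + n)) ?_⟩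
    linear_combination hv (r + n) (Nat.le_add_right r n) - hu (r + n) (Nat.le_add_right r n) +
      (x - b (r + n + 2)) * ih.2 - a (r + n + 1) * ih.1

theorem eq_wronskian_combination [IsDomain S] (ha : ∀ k, a (k + 1) ≠ 0)
    (hw : ThreeTermRecurrence x a b r w) (hu : ThreeTermRecurrence x a b r u)
    (hv : ThreeTermRecurrence x a b r v) (hw₀ : w r = 0) (hw₁ : a (r + 1) * w (r + 1) = 1)
    (hW : a (r + 1) * (u r * v (r + 1) - u (r + 1) * v r) = 1) {k : ℕ} (hk : r ≤ k) :
    w k = u r * v k - u k * v r := by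
  refine (hw.eq_of_eq_of_eq_succ (fun k => ha (k + 1)) (hv.linear_combination hu (u r) (-v r))
    ?_ ?_ hk).trans (by ring)
  · linear_combination hw₀
  · exact mul_left_cancel₀ (ha r) (by linear_combination hw₁ - hW)

end ThreeTermRecurrence

/-- Dual recurrence for the minor polynomials in the superscript: for `0 ≤ j < ℓ`,
`x p_ℓ^{(j)} = a_{j+1} p_ℓ^{(j+1)} + b_{j+1} p_ℓ^{(j)} + a_j p_ℓ^{(j-1)}`, with the
conventions `a_0 = 1` and `p_ℓ^{(-1)} = p_ℓ`. -/
theorem minor_dual_recurrence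
    (a b : ℕ → ℝ) (p : ℕ → Polynomial ℝ) (pm : ℕ → ℕ → Polynomial ℝ)
    (hpos : ∀ k, 1 ≤ k → 0 < a k)
    (ha0 : a 0 = 1)
    (h0 : p 0 = 1)
    (hbase : (X : Polynomial ℝ) * p 0 = C (a 1) * p 1 + C (b 1) * p 0)
    (hrec : ∀ k : ℕ, (X : Polynomial ℝ) * p (k + 1) =
      C (a (k + 2)) * p (k + 2) + C (b (k + 2)) * p (k + 1) + C (a (k + 1)) * p k)
    (hvan : ∀ r k, k ≤ r → pm r k = 0)
    (hpmbase : ∀ r, (X : Polynomial ℝ) * pm r 0 =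
      C (a 1) * pm r 1 + C (b 1) * pm r 0 - (if r = 0 then 1 else 0))
    (hpmrec : ∀ r k : ℕ, (X : Polynomial ℝ) * pm r (k + 1) =
      C (a (k + 2)) * pm r (k + 2) + C (b (k + 2)) * pm r (k + 1) +
        C (a (k + 1)) * pm r k - (if r = k + 1 then 1 else 0))
    (j l : ℕ) (hjl : j < l) :
    (X : Polynomial ℝ) * pm j l =
      C (a (j + 1)) * pm (j + 1) l + C (b (j + 1)) * pm j l +
        C (a j) * (if j = 0 then p l else pm (j - 1) l) := by
  have ha : ∀ k, (C (a (k + 1)) : ℝ[X]) ≠ 0 := fun k =>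
    C_ne_zero.mpr (hpos (k + 1) (Nat.le_add_left 1 k)).ne'
  have hp : ThreeTermRecurrence X (fun k => C (a k)) (fun k => C (b k)) 0 p := fun k _ => hrec k
  have hminor (r : ℕ) : ThreeTermRecurrence X (fun k => C (a k)) (fun k => C (b k)) r (pm r) :=
    fun k hk => by simpa [show r ≠ k + 1 by omega] using hpmrec r k
  have hq₁ : C (a 1) * pm 0 1 = 1 := by
    have h := hpmbase 0
    rw [if_pos rfl] at h
    linear_combination -h + (X - C (b 1)) * hvan 0 0 le_rfl
  have hdiag (r : ℕ) : C (a (r + 1)) * pm r (r + 1) = 1 := by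
    cases r with
    | zero => exact hq₁
    | succ m =>
      have h := hpmrec (m + 1) m
      rw [if_pos rfl] at h
      linear_combination -h + (X - C (b (m + 2))) * hvan (m + 1) (m + 1) le_rfl -
        C (a (m + 1)) * hvan (m + 1) m m.le_succ
  have hW (r : ℕ) : C (a (r + 1)) * (p r * pm 0 (r + 1) - p (r + 1) * pm 0 r) = 1 :=
    (hp.wronskian_eq (hminor 0) r.zero_le).trans
      (by linear_combination hq₁ + C (a 1) * pm 0 1 * h0 - C (a 1) * p 1 * hvan 0 0 le_rfl)
  have hclosed (r k : ℕ) (hrk : r ≤ k) : pm r k = p r * pm 0 k - p k * pm 0 r :=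
    (hminor r).eq_wronskian_combination ha (hp.mono r.zero_le) ((hminor 0).mono r.zero_le)
      (hvan r r le_rfl) (hdiag r) (hW r) hrk
  rcases j with _ | m
  · rw [if_pos rfl, ha0, C_1, one_mul, zero_add, hclosed 1 l hjl]
    linear_combination pm 0 l * hbase - (X - C (b 1)) * pm 0 l * h0 + p l * hq₁
  · rw [if_neg m.succ_ne_zero, Nat.add_sub_cancel, hclosed _ l hjl, hclosed _ l hjl.le,
      hclosed m l (by omega)]
    linear_combination (hp.linear_combination (hminor 0) (pm 0 l) (-p l)) m m.zero_le
end

section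
/- Perturbation formula for orthogonal polynomials: let $\{p_\ell\}$ be orthogonal polynomials with coefficients $(a_k,b_k)$ and minor polynomials $p_\ell^{(j)}$, and let $\{\hat p_j\}$ satisfy $x\hat p_j = \hat a_{j+1}\hat p_{j+1} + \hat b_{j+1}\hat p_j + \hat a_j \hat p_{j-1}$ (with $\hat p_{-1}=0$). Then $\frac{\hat a_\ell}{a_\ell}\hat p_\ell(x) = p_\ell(x)\hat p_0(x) + \sum_{j=1}^{\ell}(b_j - \hat b_j) p_\ell^{(j-1)}(x)\hat p_{j-1}(x) + \sum_{j=1}^{\ell-1}(a_j - \hat a_j)\big(p_\ell^{(j)}(x)\hat p_{j-1}(x) + p_\ell^{(j-1)}(x)\hat p_j(x)\big)$. -/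
/-!
Let `J` be the Jacobi operator of `(a, b)` on sequences `f = (f k)`, with `f (-1) = 0`. The
orthogonal polynomials solve `(J - x) p = 0` with `p 0 = 1`, and the minor polynomials solve
`(J - x) p⁽ʳ⁾ = δᵣ` with `p⁽ʳ⁾ k = 0` for `k ≤ r`. Since `a k ≠ 0`, a solution of the three-term
recurrence is determined by its first term, which gives the variation-of-constants formula
`f ℓ = f 0 * p ℓ + ∑ r < ℓ, ((J - x) f) r * p⁽ʳ⁾ ℓ` for every sequence `f`. For `f = p̂` the
hat recurrence gives `(J - x) p̂ = (J - Ĵ) p̂`, whose entries are the coefficient differences; the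
top term `(a ℓ - â ℓ) p⁽ℓ⁻¹⁾ ℓ p̂ ℓ`, with `a ℓ p⁽ℓ⁻¹⁾ ℓ = 1`, turns `p̂ ℓ` into `(â ℓ / a ℓ) p̂ ℓ`.
-/

open Polynomial Finset

section JacobiResidual

variable {A : Type*} [CommRing A]

/-- `(J - x) f` for the Jacobi matrix `J` with diagonal `b (k + 1)` and off-diagonal `a (k + 1)`
in row `k`; `f (-1) = 0` is built in by the separate row `0`. -/
def jacobiResidual (x : A) (a b : ℕ → A) : (ℕ → A) →ₗ[A] ℕ → A where
  toFun f n := match n with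
    | 0 => a 1 * f 1 + b 1 * f 0 - x * f 0
    | k + 1 => a (k + 2) * f (k + 2) + b (k + 2) * f (k + 1) + a (k + 1) * f k - x * f (k + 1)
  map_add' f g := by funext n; cases n <;> simp only [Pi.add_apply] <;> ring
  map_smul' c f := by
    funext n; cases n <;> simp only [Pi.smul_apply, smul_eq_mul, RingHom.id_apply] <;> ring

variable {x : A} {a b : ℕ → A} {f : ℕ → A}

@[simp]
theorem jacobiResidual_zero : jacobiResidual x a b f 0 = a 1 * f 1 + b 1 * f 0 - x * f 0 := rfl

@[simp]
theorem jacobiResidual_succ (k : ℕ) : jacobiResidual x a b f (k + 1) =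
    a (k + 2) * f (k + 2) + b (k + 2) * f (k + 1) + a (k + 1) * f k - x * f (k + 1) := rfl

theorem jacobiResidual_eq_zero_iff : jacobiResidual x a b f = 0 ↔
    x * f 0 = a 1 * f 1 + b 1 * f 0 ∧
      ∀ k, x * f (k + 1) = a (k + 2) * f (k + 2) + b (k + 2) * f (k + 1) + a (k + 1) * f k := by
  refine ⟨fun h => ⟨?_, fun k => ?_⟩, fun ⟨h0, hsucc⟩ => funext fun n => ?_⟩
  · have h0 := congrFun h 0
    rw [jacobiResidual_zero, Pi.zero_apply] at h0
    linear_combination -h0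
  · have hk := congrFun h (k + 1)
    rw [jacobiResidual_succ, Pi.zero_apply] at hk
    linear_combination -hk
  · cases n with
    | zero => simp only [jacobiResidual_zero, Pi.zero_apply]; linear_combination -h0
    | succ k => simp only [jacobiResidual_succ, Pi.zero_apply]; linear_combination -hsucc k

theorem jacobiResidual_sub_jacobiResidual (a' b' : ℕ → A) (f : ℕ → A) :
    jacobiResidual x a b f - jacobiResidual x a' b' f =
      jacobiResidual 0 (fun k => a k - a' k) (fun k => b k - b' k) f := by
  funext n; cases n <;> simp only [Pi.sub_apply, jacobiResidual_zero, jacobiResidual_succ] <;> ring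

theorem sum_range_jacobiResidual_zero_mul (α β f g : ℕ → A) (m : ℕ) :
    ∑ r ∈ range (m + 1), jacobiResidual 0 α β f r * g r =
      (∑ r ∈ range (m + 1), β (r + 1) * g r * f r) +
        (∑ r ∈ range m, α (r + 1) * (g (r + 1) * f r + g r * f (r + 1))) +
          α (m + 1) * g m * f (m + 1) := by
  induction m with
  | zero => rw [sum_range_one, sum_range_one, sum_range_zero, jacobiResidual_zero]; ring
  | succ m ih =>
    rw [sum_range_succ, ih]
    simp only [sum_range_succ, jacobiResidual_succ]
    ring

theorem eq_zero_of_jacobiResidual_eq_zero [NoZeroDivisors A] (ha : ∀ k, a (k + 1) ≠ 0) {N : ℕ}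
    (hf : ∀ k < N, jacobiResidual x a b f k = 0) (hf0 : f 0 = 0) : ∀ k ≤ N, f k = 0 := by
  have hpair : ∀ k < N, f k = 0 ∧ f (k + 1) = 0 := by
    intro k hk
    induction k with
    | zero =>
      have h := hf 0 hk
      rw [jacobiResidual_zero, hf0] at h
      exact ⟨hf0, (mul_eq_zero.1 (by linear_combination h)).resolve_left (ha 0)⟩
    | succ k ih =>
      obtain ⟨hk0, hk1⟩ := ih (by omega)
      have h := hf (k + 1) hk
      rw [jacobiResidual_succ, hk0, hk1] at h
      exact ⟨hk1, (mul_eq_zero.1 (by linear_combination h)).resolve_left (ha (k + 1))⟩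
  rintro (_ | k) hk
  · exact hf0
  · exact (hpair k (by omega)).2

theorem eq_mul_add_sum_jacobiResidual_mul [NoZeroDivisors A] (ha : ∀ k, a (k + 1) ≠ 0)
    {p : ℕ → A} {G : ℕ → ℕ → A} (hp : jacobiResidual x a b p = 0) (hp0 : p 0 = 1)
    (hG : ∀ r k, jacobiResidual x a b (G r) k = if r = k then 1 else 0) (hG0 : ∀ r, G r 0 = 0)
    (f : ℕ → A) (n : ℕ) :
    f n = f 0 * p n + ∑ r ∈ range n, jacobiResidual x a b f r * G r n := by
  set g := f - f 0 • p - ∑ r ∈ range n, jacobiResidual x a b f r • G r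
  have hres : ∀ k < n, jacobiResidual x a b g k = 0 := by
    intro k hk
    simp only [g, map_sub, map_smul, map_sum, hp, smul_zero, sub_zero, Pi.sub_apply,
      Finset.sum_apply, Pi.smul_apply, smul_eq_mul, hG, mul_ite, mul_one, mul_zero,
      sum_ite_eq', mem_range, hk, if_true, sub_self]
  have hg0 : g 0 = 0 := by
    simp [g, hp0, hG0]
  have hgn := eq_zero_of_jacobiResidual_eq_zero ha hres hg0 n le_rfl
  simp only [g, Pi.sub_apply, Pi.smul_apply, smul_eq_mul, Finset.sum_apply] at hgn
  linear_combination hgn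

theorem mul_apply_succ_eq_one_of_jacobiResidual_eq_ite {G : ℕ → A} {r : ℕ}
    (hG : ∀ k, jacobiResidual x a b G k = if r = k then 1 else 0) (hvan : ∀ k ≤ r, G k = 0) :
    a (r + 1) * G (r + 1) = 1 := by
  have h := hG r
  cases r with
  | zero => simpa [hvan 0 le_rfl] using h
  | succ r => simpa [hvan (r + 1) le_rfl, hvan r (by omega)] using h

end JacobiResidual

/-- Perturbation formula comparing two families of orthogonal polynomials via minor
polynomials. -/
theorem orthogonal_polynomial_perturbation
    (a b ah bh : ℕ → ℝ) (p ph : ℕ → Polynomial ℝ) (pm : ℕ → ℕ → Polynomial ℝ)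
    (hpos : ∀ k, 1 ≤ k → 0 < a k)
    (h0 : p 0 = 1)
    (hbase : (X : Polynomial ℝ) * p 0 = C (a 1) * p 1 + C (b 1) * p 0)
    (hrec : ∀ k : ℕ, (X : Polynomial ℝ) * p (k + 1) =
      C (a (k + 2)) * p (k + 2) + C (b (k + 2)) * p (k + 1) + C (a (k + 1)) * p k)
    (hvan : ∀ r k, k ≤ r → pm r k = 0)
    (hpmbase : ∀ r, (X : Polynomial ℝ) * pm r 0 =
      C (a 1) * pm r 1 + C (b 1) * pm r 0 - (if r = 0 then 1 else 0))
    (hpmrec : ∀ r k : ℕ, (X : Polynomial ℝ) * pm r (k + 1) =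
      C (a (k + 2)) * pm r (k + 2) + C (b (k + 2)) * pm r (k + 1) +
        C (a (k + 1)) * pm r k - (if r = k + 1 then 1 else 0))
    (hhbase : (X : Polynomial ℝ) * ph 0 = C (ah 1) * ph 1 + C (bh 1) * ph 0)
    (hhrec : ∀ k : ℕ, (X : Polynomial ℝ) * ph (k + 1) =
      C (ah (k + 2)) * ph (k + 2) + C (bh (k + 2)) * ph (k + 1) + C (ah (k + 1)) * ph k)
    (l : ℕ) (hl : 1 ≤ l) :
    C (ah l / a l) * ph l =
      p l * ph 0 +
      (∑ j ∈ range l, C (b (j + 1) - bh (j + 1)) * pm j l * ph j) +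
      (∑ j ∈ range (l - 1), C (a (j + 1) - ah (j + 1)) *
        (pm (j + 1) l * ph j + pm j l * ph (j + 1))) := by
  obtain ⟨m, rfl⟩ : ∃ m, l = m + 1 := ⟨l - 1, by omega⟩
  have ha : ∀ k, a (k + 1) ≠ 0 := fun k => (hpos (k + 1) k.succ_pos).ne'
  have hp : jacobiResidual X (fun k => C (a k)) (fun k => C (b k)) p = 0 :=
    jacobiResidual_eq_zero_iff.2 ⟨hbase, hrec⟩
  have hph : jacobiResidual X (fun k => C (ah k)) (fun k => C (bh k)) ph = 0 :=
    jacobiResidual_eq_zero_iff.2 ⟨hhbase, hhrec⟩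
  have hpm : ∀ r k, jacobiResidual X (fun k => C (a k)) (fun k => C (b k)) (pm r) k =
      if r = k then 1 else 0 := by
    rintro r (_ | k)
    · simp only [jacobiResidual_zero]
      linear_combination -hpmbase r
    · simp only [jacobiResidual_succ]
      linear_combination -hpmrec r k
  have hpm_succ : pm m (m + 1) = C (a (m + 1))⁻¹ := by
    have h := mul_apply_succ_eq_one_of_jacobiResidual_eq_ite (hpm m) (hvan m)
    rw [← mul_right_inj' (C_ne_zero.2 (ha m)), ← C_mul, mul_inv_cancel₀ (ha m), C_1]
    exact h
  have hexp := eq_mul_add_sum_jacobiResidual_mul (fun k => C_ne_zero.2 (ha k)) hp h0 hpm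
    (fun r => hvan r 0 r.zero_le) ph (m + 1)
  rw [← sub_zero (jacobiResidual _ _ _ ph), ← hph, jacobiResidual_sub_jacobiResidual,
    sum_range_jacobiResidual_zero_mul, hpm_succ] at hexp
  simp only [← C_sub] at hexp
  have hcoef :
      C (a (m + 1) - ah (m + 1)) * C (a (m + 1))⁻¹ = 1 - C (ah (m + 1) / a (m + 1)) := by
    rw [← C_mul, ← C_1, ← C_sub, sub_mul, mul_inv_cancel₀ (ha m), div_eq_mul_inv]
  rw [Nat.add_sub_cancel]
  linear_combination hexp + ph (m + 1) * hcoef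
end

section
/- Let $A$ be an $n\times n$ Jacobi matrix with orthogonal polynomials $p_k$ and define for $k\geq\ell$ the matrix $E^-(x,y)$ with entries $p_{k-1}(x)p_{\ell-1}(y)$ below the diagonal, $0$ on the diagonal, antisymmetrized. Then for $1 < k < n$, $\ell + 1 < k$, the commutator satisfies $[A, E^-(x,y)]_{k,\ell} = (x-y)\,p_{k-1}(x)p_{\ell-1}(y)$. -/
open Polynomial Finset

/-! By the three-term recurrence, the vector `(p_0(z), …, p_{n-1}(z))` is an eigenvector of `A`
with eigenvalue `z` in every row but the last. As `A` is symmetric and tridiagonal and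
`ℓ + 1 < k`, the entries `E⁻_{jℓ}` (`|j - k| ≤ 1`) and `E⁻_{kj}` (`|j - ℓ| ≤ 1`) entering
`[A, E⁻]_{kℓ}` all lie strictly below the diagonal, where `E⁻` is the rank-one `p_i(x) p_j(y)`.
Hence `(A E⁻)_{kℓ} = x p_k(x) p_ℓ(y)` and `(E⁻ A)_{kℓ} = p_k(x) · y p_ℓ(y)`. -/

/-- Row and column `i` are the paper's `i + 1`; `a` and `b` keep the paper's 1-based indexing. -/
def jacobiMatrix (n : ℕ) (a b : ℕ → ℝ) : Matrix (Fin n) (Fin n) ℝ :=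
  Matrix.of fun i j =>
    if (i : ℕ) = (j : ℕ) then b ((i : ℕ) + 1)
    else if (i : ℕ) + 1 = (j : ℕ) then a ((i : ℕ) + 1)
    else if (j : ℕ) + 1 = (i : ℕ) then a ((j : ℕ) + 1)
    else 0

def JacobiRecurrence (a b : ℕ → ℝ) (p : ℕ → ℝ[X]) : Prop :=
  X * p 0 = C (a 1) * p 1 + C (b 1) * p 0 ∧
    ∀ k, X * p (k + 1) =
      C (a (k + 2)) * p (k + 2) + C (b (k + 2)) * p (k + 1) + C (a (k + 1)) * p k

namespace jacobiMatrix

variable {n : ℕ} {a b : ℕ → ℝ}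

theorem isSymm : (jacobiMatrix n a b).IsSymm := by
  refine Matrix.IsSymm.ext fun i j => ?_
  simp only [jacobiMatrix, Matrix.of_apply]
  split_ifs <;> first | rfl | omega | (congr 1; omega)

theorem apply_eq_zero {i j : Fin n} (h : (i : ℕ) + 1 < j ∨ (j : ℕ) + 1 < i) :
    jacobiMatrix n a b i j = 0 := by
  simp only [jacobiMatrix, Matrix.of_apply]
  rw [if_neg (by omega), if_neg (by omega), if_neg (by omega)]

theorem sum_mul_congr {i : Fin n} {f g : Fin n → ℝ}
    (h : ∀ j : Fin n, (i : ℕ) ≤ j + 1 → (j : ℕ) ≤ i + 1 → f j = g j) :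
    ∑ j, jacobiMatrix n a b i j * f j = ∑ j, jacobiMatrix n a b i j * g j := by
  refine sum_congr rfl fun j _ => ?_
  by_cases hj : (i : ℕ) ≤ j + 1 ∧ (j : ℕ) ≤ i + 1
  · rw [h j hj.1 hj.2]
  · rw [apply_eq_zero (by omega), zero_mul, zero_mul]

theorem sum_mul_eq_three_term (v : ℕ → ℝ) (i : Fin n) (hi : (i : ℕ) + 1 < n) :
    ∑ j, jacobiMatrix n a b i j * v j =
      (if (i : ℕ) = 0 then 0 else a i * v (i - 1)) + b (i + 1) * v i + a (i + 1) * v (i + 1) := by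
  have split_row : ∀ m : ℕ, (if (i : ℕ) = m then b ((i : ℕ) + 1)
      else if (i : ℕ) + 1 = m then a ((i : ℕ) + 1)
      else if m + 1 = (i : ℕ) then a (m + 1) else 0) * v m =
      (if m + 1 = i then a i * v m else 0) + (if m = i then b (i + 1) * v m else 0)
        + (if m = i + 1 then a (i + 1) * v m else 0) := by
    intro m
    generalize (i : ℕ) = i
    split_ifs <;> first | omega | (subst_vars; ring)
  have below : ∑ m ∈ range n, (if m + 1 = i then a i * v m else 0) =
      if (i : ℕ) = 0 then 0 else a i * v (i - 1) := by
    rcases i with ⟨_ | i, hi⟩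
    · simp
    · simp only [Nat.add_right_cancel_iff, sum_ite_eq', mem_range, Nat.add_one_ne_zero,
        if_false, Nat.add_sub_cancel]
      rw [if_pos (by omega)]
  simp only [jacobiMatrix, Matrix.of_apply]
  rw [Fin.sum_univ_eq_sum_range (fun m => (if (i : ℕ) = m then b ((i : ℕ) + 1)
      else if (i : ℕ) + 1 = m then a ((i : ℕ) + 1)
      else if m + 1 = (i : ℕ) then a (m + 1) else 0) * v m)]
  simp only [split_row, sum_add_distrib, below, sum_ite_eq', mem_range, if_pos hi, if_pos i.isLt]

theorem eval_mul_eq_three_term {p : ℕ → ℝ[X]} (hp : JacobiRecurrence a b p) (z : ℝ)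
    (m : ℕ) :
    z * (p m).eval z = (if m = 0 then 0 else a m * (p (m - 1)).eval z) +
      b (m + 1) * (p m).eval z + a (m + 1) * (p (m + 1)).eval z := by
  rcases m with _ | m
  · simpa [add_comm] using congrArg (eval z) hp.1
  · simpa [add_comm, add_left_comm, add_assoc] using congrArg (eval z) (hp.2 m)

theorem sum_mul_eval {p : ℕ → ℝ[X]} (hp : JacobiRecurrence a b p) (z : ℝ) (i : Fin n)
    (hi : (i : ℕ) + 1 < n) :
    ∑ j, jacobiMatrix n a b i j * (p j).eval z = z * (p i).eval z := by
  rw [sum_mul_eq_three_term (fun m => (p m).eval z) i hi, eval_mul_eq_three_term hp]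

end jacobiMatrix

theorem commutator_Eminus_bulk_general
    (n : ℕ)
    (a b : ℕ → ℝ) (p : ℕ → Polynomial ℝ)
    (A : Matrix (Fin n) (Fin n) ℝ)
    (hA : ∀ i j : Fin n, A i j =
      if (i : ℕ) = (j : ℕ) then b ((i : ℕ) + 1)
      else if (i : ℕ) + 1 = (j : ℕ) then a ((i : ℕ) + 1)
      else if (j : ℕ) + 1 = (i : ℕ) then a ((j : ℕ) + 1)
      else 0)
    (hbase : (X : Polynomial ℝ) * p 0 = C (a 1) * p 1 + C (b 1) * p 0)
    (hrec : ∀ k : ℕ, (X : Polynomial ℝ) * p (k + 1) =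
      C (a (k + 2)) * p (k + 2) + C (b (k + 2)) * p (k + 1) + C (a (k + 1)) * p k)
    (Em : ℝ → ℝ → Matrix (Fin n) (Fin n) ℝ)
    (hEm : ∀ (x y : ℝ) (k l : Fin n), Em x y k l =
      ((if (l : ℕ) < (k : ℕ) then (p (k : ℕ)).eval x * (p (l : ℕ)).eval y
        else if (k : ℕ) = (l : ℕ) then
          (1 / 2) * ((p (k : ℕ)).eval x * (p (k : ℕ)).eval y)
        else 0) -
       (if (k : ℕ) < (l : ℕ) then (p (l : ℕ)).eval x * (p (k : ℕ)).eval y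
        else if (k : ℕ) = (l : ℕ) then
          (1 / 2) * ((p (l : ℕ)).eval x * (p (l : ℕ)).eval y)
        else 0)))
    (x y : ℝ) (k l : Fin n)
    (hkn : (k : ℕ) < n - 1) (hlk : (l : ℕ) + 1 < (k : ℕ)) :
    (A * Em x y - Em x y * A) k l =
      (x - y) * (p (k : ℕ)).eval x * (p (l : ℕ)).eval y := by
  obtain rfl : A = jacobiMatrix n a b := Matrix.ext hA
  have hp : JacobiRecurrence a b p := ⟨hbase, hrec⟩
  have hEm_lt (i j : Fin n) (h : (j : ℕ) < i) : Em x y i j = (p i).eval x * (p j).eval y := by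
    rw [hEm, if_pos h, if_neg (by omega), if_neg (by omega), sub_zero]
  have rows : ∑ j, jacobiMatrix n a b k j * Em x y j l =
      ∑ j, jacobiMatrix n a b k j * (p j).eval x * (p l).eval y := by
    simp_rw [mul_assoc]
    exact jacobiMatrix.sum_mul_congr (i := k) fun j _ _ => hEm_lt j l (by omega)
  have cols : ∑ j, Em x y k j * jacobiMatrix n a b j l =
      (p k).eval x * ∑ j, jacobiMatrix n a b l j * (p j).eval y := by
    simp_rw [mul_sum, jacobiMatrix.isSymm.apply l, mul_comm (Em x y k _),
      mul_left_comm ((p k).eval x)]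
    exact jacobiMatrix.sum_mul_congr (i := l) fun j _ _ => hEm_lt k j (by omega)
  rw [Matrix.sub_apply, Matrix.mul_apply, Matrix.mul_apply, rows, cols, ← sum_mul,
    jacobiMatrix.sum_mul_eval hp x k (by omega), jacobiMatrix.sum_mul_eval hp y l (by omega)]
  ring

/-- In the bulk of the matrix, the commutator of the Jacobi matrix `A` with
`E⁻(x,y)` is `(x-y) p_{k-1}(x) p_{ℓ-1}(y)` (0-based: `(x-y) p_k(x) p_ℓ(y)`). -/
theorem commutator_Eminus_bulk
    (n : ℕ)
    (a b : ℕ → ℝ) (p : ℕ → Polynomial ℝ)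
    (A : Matrix (Fin n) (Fin n) ℝ)
    (hA : ∀ i j : Fin n, A i j =
      if (i : ℕ) = (j : ℕ) then b ((i : ℕ) + 1)
      else if (i : ℕ) + 1 = (j : ℕ) then a ((i : ℕ) + 1)
      else if (j : ℕ) + 1 = (i : ℕ) then a ((j : ℕ) + 1)
      else 0)
    (hpos : ∀ k, 1 ≤ k → k < n → 0 < a k)
    (h0 : p 0 = 1)
    (hbase : (X : Polynomial ℝ) * p 0 = C (a 1) * p 1 + C (b 1) * p 0)
    (hrec : ∀ k : ℕ, (X : Polynomial ℝ) * p (k + 1) =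
      C (a (k + 2)) * p (k + 2) + C (b (k + 2)) * p (k + 1) + C (a (k + 1)) * p k)
    (Em : ℝ → ℝ → Matrix (Fin n) (Fin n) ℝ)
    (hEm : ∀ (x y : ℝ) (k l : Fin n), Em x y k l =
      ((if (l : ℕ) < (k : ℕ) then (p (k : ℕ)).eval x * (p (l : ℕ)).eval y
        else if (k : ℕ) = (l : ℕ) then
          (1 / 2) * ((p (k : ℕ)).eval x * (p (k : ℕ)).eval y)
        else 0) -
       (if (k : ℕ) < (l : ℕ) then (p (l : ℕ)).eval x * (p (k : ℕ)).eval y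
        else if (k : ℕ) = (l : ℕ) then
          (1 / 2) * ((p (l : ℕ)).eval x * (p (l : ℕ)).eval y)
        else 0)))
    (x y : ℝ) (k l : Fin n)
    (hk1 : 0 < (k : ℕ)) (hkn : (k : ℕ) < n - 1) (hlk : (l : ℕ) + 1 < (k : ℕ)) :
    (A * Em x y - Em x y * A) k l =
      (x - y) * (p (k : ℕ)).eval x * (p (l : ℕ)).eval y :=
  commutator_Eminus_bulk_general n a b p A hA hbase hrec Em hEm x y k l hkn hlk
end
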